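/- Let 𝓡 be a reaction network on 2 species whose reactions are exactly y*_1 → y*_2, y*_2 → y*_3, …, y*_{M−1} → y*_M, y*_M → y*_1, where y*_1,…,y*_M are distinct complexes in ℤ²_{≥0}. Assume: (1) the set {y*_1,…,y*_M} can be enumerated as ȳ_1 < ȳ_2 < … < ȳ_M in the componentwise strict order; (2) there exists i_1 ∈ {1,2} such that (ȳ_m)_{i_1} < (ȳ_{m'})_{i_1} − (ȳ_1)_{i_1} for all 1 ≤ m < m' ≤ M. Let i_2 ∈ {1,2} with i_2 ≠ i_1. Then the sequence {x_n}_{n≥1} defined by (x_n)_{i_1} = n + (y*_1)_{i_1} and (x_n)_{i_2} = (y*_1)_{i_2} is a tier sequence of 𝓡, and R = (y*_1 → y*_2, …, y*_M → y*_1) is a strong tier-1 cycle along {x_n}. -/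
import Mathlib


open Filter Finset

/-- A reaction network on `d` species: every reaction has a nonnegative source complex and
a nonnegative product complex, and the source differs from the product. -/
def IsRN (d : ℕ) (Rn : Finset ((Fin d → ℤ) × (Fin d → ℤ))) : Prop :=
  ∀ r ∈ Rn, (∀ i, 0 ≤ r.1 i) ∧ (∀ i, 0 ≤ r.2 i) ∧ r.1 ≠ r.2

/-- Mass-action intensity `λ_y(x) = ∏ i, x_i!/(x_i - y_i)!` if `x ≥ y` componentwise, else `0`. -/
def intensity (d : ℕ) (y x : Fin d → ℤ) : ℕ :=
  if ∀ i, y i ≤ x i then ∏ i : Fin d, Nat.descFactorial (x i).toNat ((y i).toNat) else 0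

/-- Cyclic successor on `{1, …, M}`: `cyc M m = m + 1` for `m < M` and `cyc M M = 1`. -/
def cyc (M m : ℕ) : ℕ := if m = M then 1 else m + 1

/-- `xshift d ystar x m n = x^m_n = x_n + ∑_{j=1}^{m-1} (y*_{j+1} - y*_j)`. -/
def xshift (d : ℕ) (ystar : ℕ → Fin d → ℤ) (x : ℕ → Fin d → ℤ) (m n : ℕ) : Fin d → ℤ :=
  fun i => x n i + ∑ j ∈ Finset.Ico 1 m, (ystar (j + 1) i - ystar j i)

/-- The ordered list `(y*_1 → y*_2, …, y*_M → y*_1)` consists of reactions of the network. -/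
def IsCycleIn (d : ℕ) (Rn : Finset ((Fin d → ℤ) × (Fin d → ℤ))) (M : ℕ)
    (ystar : ℕ → Fin d → ℤ) : Prop :=
  ∀ m, 1 ≤ m → m ≤ M → (ystar m, ystar (cyc M m)) ∈ Rn

/-- Condition (ii) of a strong tier-1 cycle, with explicit witness `m0`. -/
def TierLimits (d : ℕ) (Rn : Finset ((Fin d → ℤ) × (Fin d → ℤ))) (M : ℕ)
    (ystar : ℕ → Fin d → ℤ) (x : ℕ → Fin d → ℤ) (m0 : ℕ) : Prop :=
  ∀ m, 1 ≤ m → m ≤ M → ∀ y y' : Fin d → ℤ, (y, y') ∈ Rn →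
    (y, y') ≠ (ystar m, ystar (cyc M m)) →
    Tendsto (fun n =>
        ((intensity d (ystar m0) (xshift d ystar x m0 n) : ℝ) *
          (intensity d y (xshift d ystar x m n) : ℝ)) /
          (intensity d (ystar m) (xshift d ystar x m n) : ℝ))
      atTop (nhds 0)

/-- `R = (y*_1 → y*_2, …, y*_M → y*_1)` is a strong tier-1 cycle along `x`. -/
def IsStrongT1Cycle (d : ℕ) (Rn : Finset ((Fin d → ℤ) × (Fin d → ℤ))) (M : ℕ)
    (ystar : ℕ → Fin d → ℤ) (x : ℕ → Fin d → ℤ) : Prop :=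
  IsCycleIn d Rn M ystar ∧
  (∀ n, 0 < intensity d (ystar 1) (x n)) ∧
  ∃ m0, 1 ≤ m0 ∧ m0 ≤ M ∧ TierLimits d Rn M ystar x m0

/-- `y` is a source complex of the network. -/
def IsSourceIn (d : ℕ) (Rn : Finset ((Fin d → ℤ) × (Fin d → ℤ))) (y : Fin d → ℤ) : Prop :=
  ∃ y', (y, y') ∈ Rn

/-- `y` is a complex (source or product) of the network. -/
def ComplexOf (d : ℕ) (Rn : Finset ((Fin d → ℤ) × (Fin d → ℤ))) (y : Fin d → ℤ) : Prop :=
  ∃ r ∈ Rn, r.1 = y ∨ r.2 = y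

/-- Tier sequence of a reaction network. -/
def IsTierSeq (d : ℕ) (Rn : Finset ((Fin d → ℤ) × (Fin d → ℤ)))
    (x : ℕ → Fin d → ℤ) : Prop :=
  (∀ n i, 0 ≤ x n i) ∧
  (∃ i, Tendsto (fun n => x n i) atTop atTop) ∧
  (∀ i, (Tendsto (fun n => x n i) atTop atTop ∧ Monotone fun n => x n i) ∨
      (∃ c : ℤ, ∀ n, x n i = c)) ∧
  (∀ y y' : Fin d → ℤ, IsSourceIn d Rn y → IsSourceIn d Rn y' →
    (Tendsto (fun n => (intensity d y (x n) : ℝ) / (intensity d y' (x n) : ℝ)) atTop atTop ∨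
      ∃ c : ℝ, Tendsto (fun n => (intensity d y (x n) : ℝ) / (intensity d y' (x n) : ℝ))
        atTop (nhds c)))

/-- One reaction step: some reaction `y → y'` with `y ≤ a` fires, giving `b = a + y' - y`. -/
def ReactStep (d : ℕ) (Rn : Finset ((Fin d → ℤ) × (Fin d → ℤ)))
    (a b : Fin d → ℤ) : Prop :=
  ∃ r ∈ Rn, (∀ i, r.1 i ≤ a i) ∧ b = fun i => a i + (r.2 i - r.1 i)

/-- `w` is reachable from `z` by finitely many reaction steps. -/
def Reachable (d : ℕ) (Rn : Finset ((Fin d → ℤ) × (Fin d → ℤ)))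
    (z w : Fin d → ℤ) : Prop :=
  Relation.ReflTransGen (ReactStep d Rn) z w

/-- Weak reversibility: every reaction lies on a directed cycle of reactions. -/
def WeaklyReversible (d : ℕ) (Rn : Finset ((Fin d → ℤ) × (Fin d → ℤ))) : Prop :=
  ∀ r ∈ Rn, ∃ (K : ℕ) (ys : ℕ → Fin d → ℤ), 2 ≤ K ∧
    ys 1 = r.1 ∧ ys 2 = r.2 ∧
    (∀ j, 1 ≤ j → j < K → (ys j, ys (j + 1)) ∈ Rn) ∧
    (ys K, ys 1) ∈ Rn


lemma fin2_eq (i1 i2 i : Fin 2) (hne : i2 ≠ i1) : i = i1 ∨ i = i2 := by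
  fin_cases i1 <;> fin_cases i2 <;> fin_cases i <;> simp_all

lemma prod_fin2 (i1 i2 : Fin 2) (hne : i2 ≠ i1) (f : Fin 2 → ℕ) :
    ∏ i : Fin 2, f i = f i1 * f i2 := by
  fin_cases i1 <;> fin_cases i2 <;> simp_all [Fin.prod_univ_two, mul_comm]

lemma intensity_eq2 (i1 i2 : Fin 2) (hne : i2 ≠ i1) (y z : Fin 2 → ℤ) (h : ∀ i, y i ≤ z i) :
    intensity 2 y z
      = Nat.descFactorial (z i1).toNat ((y i1).toNat)
        * Nat.descFactorial (z i2).toNat ((y i2).toNat) := by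
  rw [intensity, if_pos h, prod_fin2 i1 i2 hne]

lemma intensity_zero (y z : Fin 2 → ℤ) (i : Fin 2) (h : ¬ y i ≤ z i) : intensity 2 y z = 0 :=
  if_neg (fun hall => h (hall i))

lemma descFactorial_pos' {a b : ℕ} (h : b ≤ a) : 0 < Nat.descFactorial a b := by
  rcases Nat.eq_zero_or_pos (Nat.descFactorial a b) with h0 | h0
  · have := Nat.descFactorial_eq_zero_iff_lt.mp h0; omega
  · exact h0

lemma intensity_pos' (y z : Fin 2 → ℤ) (h0 : ∀ i, 0 ≤ y i) (h : ∀ i, y i ≤ z i) :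
    0 < intensity 2 y z := by
  rw [intensity, if_pos h]
  apply Finset.prod_pos
  intro i _
  exact descFactorial_pos' (by have := h0 i; have := h i; omega)

lemma pow_tendsto' (c k : ℕ) (hk : k ≠ 0) :
    Tendsto (fun n : ℕ => (((n + 1 - c : ℕ) : ℝ)) ^ k) atTop atTop := by
  apply (tendsto_pow_atTop hk).comp
  exact tendsto_natCast_atTop_atTop.comp
    (tendsto_atTop.mpr (fun B => eventually_atTop.mpr ⟨B + c, fun n hn => by omega⟩))

lemma aux_zero (C K : ℝ) (hC : 0 ≤ C) (hK : 0 < K) (a0 a b c0 c : ℕ) (hq : a0 + a < b) :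
    Tendsto (fun n : ℕ => C * (Nat.descFactorial (n + c0) a0 : ℝ) * (Nat.descFactorial (n + c) a : ℝ)
      / (K * (Nat.descFactorial (n + c) b : ℝ))) atTop (nhds 0) := by
  set q := a0 + a with hq'
  set E := max c0 c with hE
  apply squeeze_zero' (g := fun n : ℕ => (C * 2 ^ q / K) / ((n + 1 - b : ℕ) : ℝ) ^ (b - q))
  · filter_upwards with n
    positivity
  · filter_upwards [eventually_atTop.mpr ⟨E + 2*b + 2, fun n hn => hn⟩] with n hn
    have ht0 : (1:ℕ) ≤ n + 1 - b := by omega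
    have hnum : Nat.descFactorial (n + c0) a0 * Nat.descFactorial (n + c) a ≤ 2 ^ q * (n + 1 - b) ^ q := by
      calc Nat.descFactorial (n + c0) a0 * Nat.descFactorial (n + c) a
          ≤ (n + c0) ^ a0 * (n + c) ^ a :=
            Nat.mul_le_mul (Nat.descFactorial_le_pow _ _) (Nat.descFactorial_le_pow _ _)
        _ ≤ (n + E) ^ a0 * (n + E) ^ a :=
            Nat.mul_le_mul (Nat.pow_le_pow_left (by omega) _) (Nat.pow_le_pow_left (by omega) _)
        _ = (n + E) ^ q := by rw [← pow_add]
        _ ≤ (2 * (n + 1 - b)) ^ q := Nat.pow_le_pow_left (by omega) _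
        _ = 2 ^ q * (n + 1 - b) ^ q := by rw [mul_pow]
    have hden : (n + 1 - b) ^ q * (n + 1 - b) ^ (b - q) ≤ Nat.descFactorial (n + c) b := by
      calc (n+1-b)^q * (n+1-b)^(b-q) = (n+1-b)^b := by rw [← pow_add]; congr 1; omega
        _ ≤ (n+c+1-b)^b := Nat.pow_le_pow_left (by omega) b
        _ ≤ _ := Nat.pow_sub_le_descFactorial (n+c) b
    have htpos : (0:ℝ) < ((n + 1 - b : ℕ) : ℝ) := by
      exact_mod_cast Nat.lt_of_lt_of_le Nat.zero_lt_one ht0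
    have h1 : C * (Nat.descFactorial (n + c0) a0 : ℝ) * (Nat.descFactorial (n + c) a : ℝ)
        ≤ C * (2^q * ((n + 1 - b : ℕ) : ℝ)^q) := by
      rw [mul_assoc]
      apply mul_le_mul_of_nonneg_left _ hC
      exact_mod_cast hnum
    have h2 : K * (((n + 1 - b : ℕ) : ℝ)^q * ((n + 1 - b : ℕ) : ℝ)^(b-q))
        ≤ K * (Nat.descFactorial (n + c) b : ℝ) := by
      apply mul_le_mul_of_nonneg_left _ (le_of_lt hK)
      exact_mod_cast hden
    calc C * (Nat.descFactorial (n + c0) a0 : ℝ) * (Nat.descFactorial (n + c) a : ℝ)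
          / (K * (Nat.descFactorial (n + c) b : ℝ))
        ≤ (C * (2^q * ((n + 1 - b : ℕ) : ℝ)^q))
          / (K * (((n + 1 - b : ℕ) : ℝ)^q * ((n + 1 - b : ℕ) : ℝ)^(b-q))) := by
          apply div_le_div₀ (by positivity) h1 (by positivity) h2
      _ = (C * 2 ^ q / K) / ((n + 1 - b : ℕ) : ℝ) ^ (b - q) := by field_simp
  · exact Tendsto.div_atTop tendsto_const_nhds (pow_tendsto' b (b - q) (by omega))

lemma aux_zero' (C K : ℝ) (hC : 0 ≤ C) (hK : 0 < K) (a b c : ℕ) (hq : a < b) :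
    Tendsto (fun n : ℕ => C * (Nat.descFactorial (n + c) a : ℝ)
      / (K * (Nat.descFactorial (n + c) b : ℝ))) atTop (nhds 0) := by
  have := aux_zero C K hC hK 0 a b 0 c (by omega)
  simpa using this

lemma aux_atTop (C K : ℝ) (hC : 0 < C) (hK : 0 < K) (a b c : ℕ) (hab : b < a) :
    Tendsto (fun n : ℕ => C * (Nat.descFactorial (n + c) a : ℝ)
      / (K * (Nat.descFactorial (n + c) b : ℝ))) atTop atTop := by
  apply tendsto_atTop_mono' (f₁ := fun n : ℕ => (C / K) * ((n + c + 1 - a : ℕ) : ℝ))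
  · filter_upwards [eventually_atTop.mpr ⟨a + b, fun n hn => hn⟩] with n hn
    have hdb : Nat.descFactorial (n + c) b ≠ 0 := by
      intro h; have := Nat.descFactorial_eq_zero_iff_lt.mp h; omega
    have hfact : Nat.descFactorial (n + c - b) (a - b) * Nat.descFactorial (n + c) b
        = Nat.descFactorial (n + c) a := Nat.descFactorial_mul_descFactorial (le_of_lt hab)
    have hlow : (n + c + 1 - a : ℕ) ≤ Nat.descFactorial (n + c - b) (a - b) := by
      calc (n + c + 1 - a : ℕ) = (n + c - b + 1 - (a - b)) ^ 1 := by rw [pow_one]; omega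
        _ ≤ (n + c - b + 1 - (a - b)) ^ (a - b) := Nat.pow_le_pow_right (by omega) (by omega)
        _ ≤ _ := Nat.pow_sub_le_descFactorial _ _
    have heq : C * (Nat.descFactorial (n + c) a : ℝ) / (K * (Nat.descFactorial (n + c) b : ℝ))
        = (C / K) * (Nat.descFactorial (n + c - b) (a - b) : ℝ) := by
      rw [← hfact]
      push_cast
      have : ((Nat.descFactorial (n + c) b : ℕ) : ℝ) ≠ 0 := by exact_mod_cast hdb
      field_simp
    rw [heq]
    apply mul_le_mul_of_nonneg_left _ (by positivity)
    exact_mod_cast hlow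
  · apply Tendsto.const_mul_atTop (by positivity)
    exact tendsto_natCast_atTop_atTop.comp
      (tendsto_atTop.mpr (fun B => eventually_atTop.mpr ⟨B + a, fun n hn => by omega⟩))


/-- Corollary 2 (structural part): a two-species network whose reactions are exactly the cycle,
with totally ordered complexes satisfying the gap condition, gives a tier sequence along which
`R` is a strong tier-1 cycle. -/
theorem stmt7 {M : ℕ} (hM : 1 ≤ M)
    (Rn : Finset ((Fin 2 → ℤ) × (Fin 2 → ℤ))) (hRn : IsRN 2 Rn)
    (ystar ybar : ℕ → Fin 2 → ℤ)
    (hexact : ∀ r : (Fin 2 → ℤ) × (Fin 2 → ℤ),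
      r ∈ Rn ↔ ∃ m, 1 ≤ m ∧ m ≤ M ∧ r = (ystar m, ystar (cyc M m)))
    (hdist : ∀ m m', 1 ≤ m → m ≤ M → 1 ≤ m' → m' ≤ M → ystar m = ystar m' → m = m')
    (hset : ∀ y : Fin 2 → ℤ,
      (∃ m, 1 ≤ m ∧ m ≤ M ∧ ystar m = y) ↔ (∃ k, 1 ≤ k ∧ k ≤ M ∧ ybar k = y))
    (hord : ∀ m, 1 ≤ m → m < M → ∀ i, ybar m i < ybar (m + 1) i)
    (i1 i2 : Fin 2) (hne : i2 ≠ i1)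
    (hgap : ∀ m m', 1 ≤ m → m < m' → m' ≤ M → ybar m i1 < ybar m' i1 - ybar 1 i1) :
    IsTierSeq 2 Rn
      (fun n i => if i = i1 then ((n : ℤ) + 1) + ystar 1 i else ystar 1 i) ∧
    IsStrongT1Cycle 2 Rn M ystar
      (fun n i => if i = i1 then ((n : ℤ) + 1) + ystar 1 i else ystar 1 i) := by
  -- abbreviate the sequence
  set x : ℕ → Fin 2 → ℤ := fun n i => if i = i1 then ((n : ℤ) + 1) + ystar 1 i else ystar 1 i
    with hxdef
  have hX1 : ∀ n, x n i1 = ((n : ℤ) + 1) + ystar 1 i1 := by intro n; simp [hxdef]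
  have hX2 : ∀ n, x n i2 = ystar 1 i2 := by intro n; simp [hxdef, hne]
  have hself : ∀ m, 1 ≤ m → m ≤ M → (ystar m, ystar (cyc M m)) ∈ Rn :=
    fun m h1 h2 => (hexact _).mpr ⟨m, h1, h2, rfl⟩
  have hnn : ∀ m, 1 ≤ m → m ≤ M → ∀ i, 0 ≤ ystar m i :=
    fun m h1 h2 i => (hRn _ (hself m h1 h2)).1 i
  have hordlt : ∀ k' k i, 1 ≤ k → k < k' → k' ≤ M → ybar k i < ybar k' i := by
    intro k'
    induction k' with
    | zero => omega
    | succ K ih =>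
      intro k i hk hkk hKM
      rcases Nat.lt_or_ge k K with h | h
      · exact lt_trans (ih k i hk h (by omega)) (hord K (by omega) (by omega) i)
      · have hkK : k = K := by omega
        subst hkK
        exact hord k hk (by omega) i
  obtain ⟨m0, hm01, hm0M, hm0⟩ : ∃ m, 1 ≤ m ∧ m ≤ M ∧ ystar m = ybar 1 :=
    (hset (ybar 1)).mpr ⟨1, le_refl 1, hM, rfl⟩
  have hm0' : ∀ i, ybar 1 i = ystar m0 i := fun i => (congrFun hm0 i).symm
  have hbar1nn : ∀ i, 0 ≤ ybar 1 i := fun i => hm0 ▸ hnn m0 hm01 hm0M i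
  have hxs : ∀ m, 1 ≤ m → ∀ n i, xshift 2 ystar x m n i = x n i + (ystar m i - ystar 1 i) := by
    intro m hm n i
    unfold xshift
    congr 1
    rw [Finset.sum_Ico_eq_sum_range]
    have key := Finset.sum_range_sub (f := fun j => ystar (1 + j) i) (n := m - 1)
    simp only [Nat.add_zero] at key
    calc ∑ j ∈ Finset.range (m - 1), (ystar (1 + j + 1) i - ystar (1 + j) i)
        = ∑ j ∈ Finset.range (m - 1), (ystar (1 + (j + 1)) i - ystar (1 + j) i) := by
          apply Finset.sum_congr rfl; intro j _; rw [show 1 + j + 1 = 1 + (j + 1) by omega]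
      _ = ystar (1 + (m - 1)) i - ystar (1 + 0) i := key
      _ = ystar m i - ystar 1 i := by rw [show 1 + (m - 1) = m by omega]
  have hxs1 : ∀ m, 1 ≤ m → ∀ n, xshift 2 ystar x m n i1 = ((n : ℤ) + 1) + ystar m i1 := by
    intro m hm n; rw [hxs m hm, hX1]; ring
  have hxs2 : ∀ m, 1 ≤ m → ∀ n, xshift 2 ystar x m n i2 = ystar m i2 := by
    intro m hm n; rw [hxs m hm, hX2]; ring
  have hysrc : ∀ z : Fin 2 → ℤ, IsSourceIn 2 Rn z → ∃ m, 1 ≤ m ∧ m ≤ M ∧ z = ystar m := by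
    rintro z ⟨w, hw⟩
    obtain ⟨m, h1, h2, he⟩ := (hexact _).mp hw
    exact ⟨m, h1, h2, (Prod.ext_iff.mp he).1⟩
  constructor
  · -- IsTierSeq
    refine ⟨?_, ⟨i1, ?_⟩, ?_, ?_⟩
    · -- nonnegativity
      intro n i
      rcases fin2_eq i1 i2 i hne with h | h <;> rw [h]
      · rw [hX1]; have := hnn 1 le_rfl hM i1; have : (0:ℤ) ≤ (n:ℤ) := Int.natCast_nonneg n; omega
      · rw [hX2]; exact hnn 1 le_rfl hM i2
    · -- tendsto atTop at i1
      have : (fun n => x n i1) = fun n : ℕ => ((n : ℤ) + 1) + ystar 1 i1 := funext hX1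
      rw [this]
      exact tendsto_atTop_add_const_right _ _
        (tendsto_atTop_add_const_right _ _ tendsto_natCast_atTop_atTop)
    · -- trichotomy per coordinate
      intro i
      rcases fin2_eq i1 i2 i hne with h | h <;> rw [h]
      · left
        constructor
        · have : (fun n => x n i1) = fun n : ℕ => ((n : ℤ) + 1) + ystar 1 i1 := funext hX1
          rw [this]
          exact tendsto_atTop_add_const_right _ _
            (tendsto_atTop_add_const_right _ _ tendsto_natCast_atTop_atTop)
        · intro a b hab
          simp only [hX1]
          omega
      · exact Or.inr ⟨ystar 1 i2, hX2⟩
    · -- ratios of intensities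
      intro y y' hy hy'
      obtain ⟨my, hmy1, hmyM, hyy⟩ := hysrc y hy
      obtain ⟨my', hmy'1, hmy'M, hyy'⟩ := hysrc y' hy'
      have hynn : ∀ i, 0 ≤ y i := fun i => hyy ▸ hnn my hmy1 hmyM i
      have hy'nn : ∀ i, 0 ≤ y' i := fun i => hyy' ▸ hnn my' hmy'1 hmy'M i
      by_cases h2' : y' i2 ≤ ystar 1 i2
      · by_cases h1' : y i2 ≤ ystar 1 i2
        · -- both intensities eventually positive
          have hev : (fun n => (intensity 2 y (x n) : ℝ) / (intensity 2 y' (x n) : ℝ))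
              =ᶠ[atTop] (fun n => ((Nat.descFactorial (ystar 1 i2).toNat (y i2).toNat : ℕ) : ℝ)
                  * ((Nat.descFactorial (n + (1 + (ystar 1 i1).toNat)) (y i1).toNat : ℕ) : ℝ)
                / (((Nat.descFactorial (ystar 1 i2).toNat (y' i2).toNat : ℕ) : ℝ)
                  * ((Nat.descFactorial (n + (1 + (ystar 1 i1).toNat)) (y' i1).toNat : ℕ) : ℝ))) := by
            filter_upwards [eventually_ge_atTop ((y i1).toNat + (y' i1).toNat)] with n hn
            have hs1 := hnn 1 le_rfl hM i1
            have hcy : ∀ i, y i ≤ x n i := by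
              intro i
              rcases fin2_eq i1 i2 i hne with h | h <;> rw [h]
              · rw [hX1]; have := hynn i1; omega
              · rw [hX2]; exact h1'
            have hcy' : ∀ i, y' i ≤ x n i := by
              intro i
              rcases fin2_eq i1 i2 i hne with h | h <;> rw [h]
              · rw [hX1]; have := hy'nn i1; omega
              · rw [hX2]; exact h2'
            rw [intensity_eq2 i1 i2 hne y _ hcy, intensity_eq2 i1 i2 hne y' _ hcy']
            have e1 : (x n i1).toNat = n + (1 + (ystar 1 i1).toNat) := by rw [hX1]; omega
            have e2 : (x n i2).toNat = (ystar 1 i2).toNat := by rw [hX2]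
            rw [e1, e2]
            push_cast
            ring
          have hCy : 0 < Nat.descFactorial (ystar 1 i2).toNat (y i2).toNat :=
            descFactorial_pos' (by have := hynn i2; omega)
          have hCy' : 0 < Nat.descFactorial (ystar 1 i2).toNat (y' i2).toNat :=
            descFactorial_pos' (by have := hy'nn i2; omega)
          rcases lt_trichotomy ((y i1).toNat) ((y' i1).toNat) with hab | hab | hab
          · right
            refine ⟨0, Tendsto.congr' hev.symm ?_⟩
            exact aux_zero' _ _ (by positivity) (by exact_mod_cast hCy') _ _ _ hab
          · right
            refine ⟨((Nat.descFactorial (ystar 1 i2).toNat (y i2).toNat : ℕ) : ℝ)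
              / ((Nat.descFactorial (ystar 1 i2).toNat (y' i2).toNat : ℕ) : ℝ), ?_⟩
            apply Tendsto.congr' _ tendsto_const_nhds
            filter_upwards [hev, eventually_ge_atTop ((y' i1).toNat)] with n h h'
            rw [h, hab]
            have hd : ((Nat.descFactorial (n + (1 + (ystar 1 i1).toNat)) (y' i1).toNat : ℕ) : ℝ) ≠ 0 := by
              have hpos : 0 < Nat.descFactorial (n + (1 + (ystar 1 i1).toNat)) (y' i1).toNat :=
                descFactorial_pos' (by omega)
              exact_mod_cast hpos.ne'
            field_simp
          · left
            refine Tendsto.congr' hev.symm ?_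
            exact aux_atTop _ _ (by exact_mod_cast hCy) (by exact_mod_cast hCy') _ _ _ hab
        · right
          refine ⟨0, Tendsto.congr' ?_ tendsto_const_nhds⟩
          filter_upwards with n
          have : intensity 2 y (x n) = 0 := intensity_zero y (x n) i2 (by rw [hX2]; exact h1')
          rw [this]
          simp
      · right
        refine ⟨0, Tendsto.congr' ?_ tendsto_const_nhds⟩
        filter_upwards with n
        have : intensity 2 y' (x n) = 0 := intensity_zero y' (x n) i2 (by rw [hX2]; exact h2')
        rw [this]
        simp
  · -- IsStrongT1Cycle
    refine ⟨hself, ?_, m0, hm01, hm0M, ?_⟩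
    · intro n
      apply intensity_pos' _ _ (hnn 1 le_rfl hM)
      intro i
      rcases fin2_eq i1 i2 i hne with h | h <;> rw [h]
      · rw [hX1]; have : (0:ℤ) ≤ (n:ℤ) := Int.natCast_nonneg n; omega
      · rw [hX2]
    · -- TierLimits
      intro m hm1 hmM y y' hmem hneq
      obtain ⟨m', hm'1, hm'M, he⟩ := (hexact _).mp hmem
      have hy : y = ystar m' := (Prod.ext_iff.mp he).1
      have hy' : y' = ystar (cyc M m') := (Prod.ext_iff.mp he).2
      have hm'm : m' ≠ m := by
        intro h; subst h; exact hneq (by rw [hy, hy'])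
      have hysm : y ≠ ystar m := by
        intro h
        exact hm'm (hdist m' m hm'1 hm'M hm1 hmM (hy ▸ h))
      obtain ⟨k, hk1, hkM, hk⟩ := (hset (ystar m)).mp ⟨m, hm1, hmM, rfl⟩
      obtain ⟨k', hk'1, hk'M, hk'⟩ := (hset y).mp ⟨m', hm'1, hm'M, hy.symm⟩
      have hkk' : k' ≠ k := by
        intro h; exact hysm (by rw [← hk', h, hk])
      have hynn : ∀ i, 0 ≤ y i := fun i => hy ▸ hnn m' hm'1 hm'M i
      have hmnn : ∀ i, 0 ≤ ystar m i := hnn m hm1 hmM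
      have hm0nn : ∀ i, 0 ≤ ystar m0 i := hnn m0 hm01 hm0M
      rcases lt_or_gt_of_ne hkk' with hlt | hgt
      · -- k' < k : genuine limit computation
        have hgap' : ybar 1 i1 + y i1 < ystar m i1 := by
          have := hgap k' k hk'1 hlt hkM
          rw [← hk, ← hk']
          omega
        have hi2le : y i2 ≤ ystar m i2 := by
          rw [← hk, ← hk']
          exact le_of_lt (hordlt k k' i2 hk'1 hlt hkM)
        have hq : (ybar 1 i1).toNat + (y i1).toNat < (ystar m i1).toNat := by
          have h1 := hbar1nn i1; have h2 := hynn i1; have h3 := hmnn i1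
          omega
        apply Tendsto.congr (f₁ := fun n : ℕ =>
          (((Nat.descFactorial (ybar 1 i2).toNat (ybar 1 i2).toNat
              * Nat.descFactorial (ystar m i2).toNat (y i2).toNat : ℕ)) : ℝ)
            * ((Nat.descFactorial (n + (1 + (ybar 1 i1).toNat)) (ybar 1 i1).toNat : ℕ) : ℝ)
            * ((Nat.descFactorial (n + (1 + (ystar m i1).toNat)) (y i1).toNat : ℕ) : ℝ)
          / (((Nat.descFactorial (ystar m i2).toNat (ystar m i2).toNat : ℕ) : ℝ)
            * ((Nat.descFactorial (n + (1 + (ystar m i1).toNat)) (ystar m i1).toNat : ℕ) : ℝ)))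
        · intro n
          have hnn0 : (0:ℤ) ≤ (n:ℤ) := Int.natCast_nonneg n
          have hc0 : ∀ i, ystar m0 i ≤ xshift 2 ystar x m0 n i := by
            intro i
            rcases fin2_eq i1 i2 i hne with h | h <;> rw [h]
            · rw [hxs1 m0 hm01]; omega
            · rw [hxs2 m0 hm01]
          have hcm : ∀ i, ystar m i ≤ xshift 2 ystar x m n i := by
            intro i
            rcases fin2_eq i1 i2 i hne with h | h <;> rw [h]
            · rw [hxs1 m hm1]; omega
            · rw [hxs2 m hm1]
          have hcy : ∀ i, y i ≤ xshift 2 ystar x m n i := by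
            intro i
            rcases fin2_eq i1 i2 i hne with h | h <;> rw [h]
            · rw [hxs1 m hm1]; have := hbar1nn i1; omega
            · rw [hxs2 m hm1]; exact hi2le
          rw [intensity_eq2 i1 i2 hne _ _ hc0, intensity_eq2 i1 i2 hne _ _ hcm,
            intensity_eq2 i1 i2 hne _ _ hcy]
          have e01 : (xshift 2 ystar x m0 n i1).toNat = n + (1 + (ybar 1 i1).toNat) := by
            rw [hxs1 m0 hm01]; have := hm0' i1; have := hbar1nn i1; omega
          have e02 : (xshift 2 ystar x m0 n i2).toNat = (ybar 1 i2).toNat := by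
            rw [hxs2 m0 hm01]; rw [← hm0]
          have em1 : (xshift 2 ystar x m n i1).toNat = n + (1 + (ystar m i1).toNat) := by
            rw [hxs1 m hm1]; have := hmnn i1; omega
          have em2 : (xshift 2 ystar x m n i2).toNat = (ystar m i2).toNat := by
            rw [hxs2 m hm1]
          rw [e01, e02, em1, em2]
          have e03 : (ystar m0 i1).toNat = (ybar 1 i1).toNat := by rw [hm0]
          have e04 : (ystar m0 i2).toNat = (ybar 1 i2).toNat := by rw [hm0]
          rw [e03, e04]
          push_cast
          ring
        · exact aux_zero _ _ (by positivity)
            (by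
              have : 0 < Nat.descFactorial (ystar m i2).toNat (ystar m i2).toNat :=
                descFactorial_pos' le_rfl
              exact_mod_cast this)
            _ _ _ _ _ hq
      · -- k < k' : intensity of y vanishes along xshift
        apply Tendsto.congr (f₁ := fun _ : ℕ => (0:ℝ))
        · intro n
          have hylt : ystar m i2 < y i2 := by
            rw [← hk, ← hk']
            exact hordlt k' k i2 hk1 hgt hk'M
          have : intensity 2 y (xshift 2 ystar x m n) = 0 := by
            apply intensity_zero y _ i2
            rw [hxs2 m hm1]
            omega
          rw [this]
          simp
        · exact tendsto_const_nhds
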